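/- arXiv:2508.05960 — 3 statements merged into one kernel-verified Lean document; each statement's English description precedes it below -/
import Mathlib

section
/- The TD Bellman operator Ĥ^π satisfies ‖Ĥ^π Q₁ - Ĥ^π Q₂‖_∞ ≤ (2γ - γ²) ‖Q₁ - Q₂‖_∞ for all bounded Q₁, Q₂. -/
/-- The empirical TD Bellman operator. -/
def Hop {S A : Type*} [Fintype S] (P : S → A → S → ℝ) (r : S → A → ℝ) (γ : ℝ)
    (π : S → A) (Q : S → A → ℝ) : S → A → ℝ :=
  fun s a => r s a + γ * ∑ s', P s a s' *
    (Q s' (π s') - (r s a + γ * Q s' (π s') - Q s (π s)))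

/-
The reward cancels in `Ĥ^π Q₁ - Ĥ^π Q₂`, which is `γ` times a `P̂`-average of
`(1 - γ) ΔQ(s', π s') + ΔQ(s, π s)`, where `ΔQ = Q₁ - Q₂`. Each such term is bounded by
`(1 - γ) ‖ΔQ‖ + ‖ΔQ‖ = (2 - γ) ‖ΔQ‖`, and averaging preserves the bound.
-/

theorem abs_sum_mul_le_of_abs_le {ι : Type*} (s : Finset ι) {w f : ι → ℝ} {C : ℝ}
    (hw0 : ∀ i ∈ s, 0 ≤ w i) (hw1 : ∑ i ∈ s, w i = 1) (hf : ∀ i ∈ s, |f i| ≤ C) :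
    |∑ i ∈ s, w i * f i| ≤ C :=
  calc |∑ i ∈ s, w i * f i| ≤ ∑ i ∈ s, w i * |f i| := by
        refine (Finset.abs_sum_le_sum_abs _ _).trans_eq (Finset.sum_congr rfl fun i hi => ?_)
        rw [abs_mul, abs_of_nonneg (hw0 i hi)]
    _ ≤ ∑ i ∈ s, w i * C :=
        Finset.sum_le_sum fun i hi => mul_le_mul_of_nonneg_left (hf i hi) (hw0 i hi)
    _ = C := by rw [← Finset.sum_mul, hw1, one_mul]

theorem abs_sub_apply_le_dist {S A : Type*} [Fintype S] [Fintype A] (f g : S → A → ℝ)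
    (s : S) (a : A) : |f s a - g s a| ≤ dist f g := by
  rw [← Real.dist_eq]
  exact (dist_le_pi_dist (f s) (g s) a).trans (dist_le_pi_dist f g s)

theorem Hop_sub_Hop {S A : Type*} [Fintype S] (P : S → A → S → ℝ) (r : S → A → ℝ) (γ : ℝ)
    (π : S → A) (Q₁ Q₂ : S → A → ℝ) (s : S) (a : A) :
    Hop P r γ π Q₁ s a - Hop P r γ π Q₂ s a =
      γ * ∑ s', P s a s' *
        ((1 - γ) * (Q₁ s' (π s') - Q₂ s' (π s')) + (Q₁ s (π s) - Q₂ s (π s))) := by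
  simp only [Hop, add_sub_add_left_eq_sub, ← mul_sub, ← Finset.sum_sub_distrib]
  exact congrArg (γ * ·) (Finset.sum_congr rfl fun s' _ => by ring)

theorem abs_Hop_sub_Hop_le {S A : Type*} [Fintype S] [Fintype A]
    (P : S → A → S → ℝ) (hP0 : ∀ s a s', 0 ≤ P s a s') (hP1 : ∀ s a, ∑ s', P s a s' = 1)
    (r : S → A → ℝ) {γ : ℝ} (hγ0 : 0 ≤ γ) (hγ1 : γ ≤ 1) (π : S → A)
    (Q₁ Q₂ : S → A → ℝ) (s : S) (a : A) :
    |Hop P r γ π Q₁ s a - Hop P r γ π Q₂ s a| ≤ (2 * γ - γ ^ 2) * dist Q₁ Q₂ := by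
  set d := dist Q₁ Q₂
  have hterm : ∀ s', |(1 - γ) * (Q₁ s' (π s') - Q₂ s' (π s')) + (Q₁ s (π s) - Q₂ s (π s))|
      ≤ (2 - γ) * d := fun s' =>
    calc _ ≤ |(1 - γ) * (Q₁ s' (π s') - Q₂ s' (π s'))| + |Q₁ s (π s) - Q₂ s (π s)| :=
          abs_add_le _ _
      _ = (1 - γ) * |Q₁ s' (π s') - Q₂ s' (π s')| + |Q₁ s (π s) - Q₂ s (π s)| := by
          rw [abs_mul, abs_of_nonneg (sub_nonneg.2 hγ1)]
      _ ≤ (1 - γ) * d + d := by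
          gcongr <;> exact abs_sub_apply_le_dist Q₁ Q₂ _ _
      _ = (2 - γ) * d := by ring
  have havg := abs_sum_mul_le_of_abs_le Finset.univ (fun s' _ => hP0 s a s') (hP1 s a)
    fun s' _ => hterm s'
  rw [Hop_sub_Hop, abs_mul, abs_of_nonneg hγ0]
  calc _ ≤ γ * ((2 - γ) * d) := mul_le_mul_of_nonneg_left havg hγ0
    _ = (2 * γ - γ ^ 2) * d := by ring

theorem Hop_lipschitz_general {S A : Type*} [Fintype S] [Fintype A]
    (P : S → A → S → ℝ) (hP0 : ∀ s a s', 0 ≤ P s a s')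
    (hP1 : ∀ s a, ∑ s', P s a s' = 1)
    (r : S → A → ℝ) (γ : ℝ) (hγ0 : 0 ≤ γ) (hγ1 : γ < 1) (π : S → A)
    (Q₁ Q₂ : S → A → ℝ) :
    dist (Hop P r γ π Q₁) (Hop P r γ π Q₂) ≤ (2 * γ - γ ^ 2) * dist Q₁ Q₂ := by
  have hC : 0 ≤ (2 * γ - γ ^ 2) * dist Q₁ Q₂ :=
    mul_nonneg (by nlinarith) dist_nonneg
  refine (dist_pi_le_iff hC).2 fun s => (dist_pi_le_iff hC).2 fun a => ?_
  rw [Real.dist_eq]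
  exact abs_Hop_sub_Hop_le P hP0 hP1 r hγ0 hγ1.le π Q₁ Q₂ s a

/-- The TD Bellman operator satisfies
`‖Ĥ^π Q₁ - Ĥ^π Q₂‖_∞ ≤ (2γ - γ²) ‖Q₁ - Q₂‖_∞`. -/
theorem Hop_lipschitz {S A : Type*} [Fintype S] [Fintype A] [Nonempty S] [Nonempty A]
    (P : S → A → S → ℝ) (hP0 : ∀ s a s', 0 ≤ P s a s')
    (hP1 : ∀ s a, ∑ s', P s a s' = 1)
    (r : S → A → ℝ) (γ : ℝ) (hγ0 : 0 ≤ γ) (hγ1 : γ < 1) (π : S → A)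
    (Q₁ Q₂ : S → A → ℝ) :
    dist (Hop P r γ π Q₁) (Hop P r γ π Q₂) ≤ (2 * γ - γ ^ 2) * dist Q₁ Q₂ :=
  Hop_lipschitz_general P hP0 hP1 r γ hγ0 hγ1 π Q₁ Q₂
end

section
/- Let V̂ and V be bounded functions on a finite state set S satisfying V̂(s) = r(s) + γ Σ_{s'} P̂(s'|s) V̂(s') and V(s) = r(s) + γ Σ_{s'} P(s'|s) V(s'), with ‖V‖_∞ ≤ r_max/(1-γ) and Σ_{s'} |P̂(s'|s) - P(s'|s)| ≤ ε for all s. Then ‖V̂ - V‖_∞ ≤ γ ε r_max / (1-γ)². -/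
/-!
Subtracting the two Bellman equations gives
`V̂ - V = γ P̂ (V̂ - V) + γ (P̂ - P) V`.
Since `P̂` is stochastic it does not increase the sup norm, and `‖(P̂ - P) V‖_∞ ≤ ε ‖V‖_∞`, so
`‖V̂ - V‖_∞ ≤ γ ‖V̂ - V‖_∞ + γ ε r_max / (1 - γ)`; solving for `‖V̂ - V‖_∞` gives the bound.
-/

open Finset

lemma abs_sum_mul_le_sum_abs_mul {ι : Type*} (s : Finset ι) (w f : ι → ℝ) {M : ℝ}
    (hf : ∀ i, |f i| ≤ M) : |∑ i ∈ s, w i * f i| ≤ (∑ i ∈ s, |w i|) * M :=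
  calc |∑ i ∈ s, w i * f i| ≤ ∑ i ∈ s, |w i| * |f i| := by
        simpa only [abs_mul] using abs_sum_le_sum_abs (fun i => w i * f i) s
    _ ≤ ∑ i ∈ s, |w i| * M := sum_le_sum fun i _ => mul_le_mul_of_nonneg_left (hf i) (abs_nonneg _)
    _ = (∑ i ∈ s, |w i|) * M := (sum_mul ..).symm

lemma norm_le_div_of_forall_abs_le_mul_norm_add {S : Type*} [Fintype S] [Nonempty S]
    {f : S → ℝ} {γ c : ℝ} (hγ : γ < 1) (hf : ∀ s, |f s| ≤ γ * ‖f‖ + c) :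
    ‖f‖ ≤ c / (1 - γ) := by
  have hnorm : ‖f‖ ≤ γ * ‖f‖ + c := (pi_norm_le_iff_of_nonempty f).2 hf
  rw [le_div_iff₀ (sub_pos.2 hγ)]
  linarith

section Bellman

variable {S : Type*} [Fintype S] {Phat P : S → S → ℝ} {r Vhat V : S → ℝ} {γ : ℝ}

lemma abs_sum_stochastic_mul_le_norm (hPhat0 : ∀ s s', 0 ≤ Phat s s')
    (hPhat1 : ∀ s, ∑ s', Phat s s' = 1) (f : S → ℝ) (s : S) :
    |∑ s', Phat s s' * f s'| ≤ ‖f‖ := by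
  have := abs_sum_mul_le_sum_abs_mul univ (Phat s) f (norm_le_pi_norm f)
  simpa only [abs_of_nonneg (hPhat0 s _), hPhat1 s, one_mul] using this

lemma bellman_sub_eq (hVhat : ∀ s, Vhat s = r s + γ * ∑ s', Phat s s' * Vhat s')
    (hV : ∀ s, V s = r s + γ * ∑ s', P s s' * V s') (s : S) :
    Vhat s - V s = γ * ∑ s', Phat s s' * (Vhat s' - V s')
      + γ * ∑ s', (Phat s s' - P s s') * V s' := by
  rw [hVhat s, hV s, ← mul_add, ← sum_add_distrib]
  simp only [sub_mul, mul_sub, sum_sub_distrib, sub_add_sub_cancel]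
  ring

lemma abs_bellman_sub_le (hγ0 : 0 ≤ γ) (hPhat0 : ∀ s s', 0 ≤ Phat s s')
    (hPhat1 : ∀ s, ∑ s', Phat s s' = 1)
    (hVhat : ∀ s, Vhat s = r s + γ * ∑ s', Phat s s' * Vhat s')
    (hV : ∀ s, V s = r s + γ * ∑ s', P s s' * V s') {B : ℝ} (hVB : ∀ s, |V s| ≤ B) (s : S) :
    |Vhat s - V s| ≤ γ * ‖Vhat - V‖ + γ * ((∑ s', |Phat s s' - P s s'|) * B) := by
  rw [bellman_sub_eq hVhat hV s]
  refine (abs_add_le _ _).trans ?_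
  rw [abs_mul, abs_mul, abs_of_nonneg hγ0]
  gcongr
  · exact abs_sum_stochastic_mul_le_norm hPhat0 hPhat1 (Vhat - V) s
  · exact abs_sum_mul_le_sum_abs_mul univ _ V hVB

end Bellman

theorem value_sampling_error_bound_general
    {S : Type*} [Fintype S]
    (Phat P : S → S → ℝ)
    (hPhat0 : ∀ s s', 0 ≤ Phat s s') (hPhat1 : ∀ s, ∑ s', Phat s s' = 1)
    (r : S → ℝ) (γ ε rmax : ℝ)
    (hγ0 : 0 ≤ γ) (hγ1 : γ < 1)
    (Vhat V : S → ℝ)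
    (hVhat : ∀ s, Vhat s = r s + γ * ∑ s', Phat s s' * Vhat s')
    (hV : ∀ s, V s = r s + γ * ∑ s', P s s' * V s')
    (hVbound : ∀ s, |V s| ≤ rmax / (1 - γ))
    (hsample : ∀ s, ∑ s', |Phat s s' - P s s'| ≤ ε) :
    ∀ s, |Vhat s - V s| ≤ γ * ε * rmax / (1 - γ) ^ 2 := by
  intro s
  have : Nonempty S := ⟨s⟩
  have hB : 0 ≤ rmax / (1 - γ) := (abs_nonneg _).trans (hVbound s)
  have hstep : ∀ t, |(Vhat - V) t| ≤ γ * ‖Vhat - V‖ + γ * ε * (rmax / (1 - γ)) := fun t =>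
    calc |(Vhat - V) t|
        ≤ γ * ‖Vhat - V‖ + γ * ((∑ s', |Phat t s' - P t s'|) * (rmax / (1 - γ))) :=
          abs_bellman_sub_le hγ0 hPhat0 hPhat1 hVhat hV hVbound t
      _ ≤ γ * ‖Vhat - V‖ + γ * ε * (rmax / (1 - γ)) := by
          rw [mul_assoc γ ε]; gcongr; exact hsample t
  calc |Vhat s - V s| ≤ ‖Vhat - V‖ := norm_le_pi_norm (Vhat - V) s
    _ ≤ γ * ε * (rmax / (1 - γ)) / (1 - γ) :=
        norm_le_div_of_forall_abs_le_mul_norm_add hγ1 hstep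
    _ = γ * ε * rmax / (1 - γ) ^ 2 := by rw [mul_div_assoc', div_div, sq]

/-- Value-function perturbation bound under transition estimation error:
`‖V̂ - V‖_∞ ≤ γ ε r_max / (1-γ)²`. -/
theorem value_sampling_error_bound
    {S : Type*} [Fintype S] [Nonempty S]
    (Phat P : S → S → ℝ)
    (hPhat0 : ∀ s s', 0 ≤ Phat s s') (hPhat1 : ∀ s, ∑ s', Phat s s' = 1)
    (hP0 : ∀ s s', 0 ≤ P s s') (hP1 : ∀ s, ∑ s', P s s' = 1)
    (r : S → ℝ) (γ ε rmax : ℝ)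
    (hγ0 : 0 ≤ γ) (hγ1 : γ < 1) (hε : 0 < ε) (hrmax : 0 < rmax)
    (Vhat V : S → ℝ)
    (hVhat : ∀ s, Vhat s = r s + γ * ∑ s', Phat s s' * Vhat s')
    (hV : ∀ s, V s = r s + γ * ∑ s', P s s' * V s')
    (hVbound : ∀ s, |V s| ≤ rmax / (1 - γ))
    (hsample : ∀ s, ∑ s', |Phat s s' - P s s'| ≤ ε) :
    ∀ s, |Vhat s - V s| ≤ γ * ε * rmax / (1 - γ) ^ 2 :=
  value_sampling_error_bound_general Phat P hPhat0 hPhat1 r γ ε rmax hγ0 hγ1 Vhat V hVhat hV hVbound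
    hsample
end

section
/- Let V₁, V₂ be bounded functions on finite S satisfying V₁(s) = r(s, a₁(s)) + γ𝔼_{s'∼P(·|s,a₁(s))}[V₁(s')] and V₂(s) = r(s, a₂(s)) + γ𝔼_{s'∼P(·|s,a₂(s))}[V₂(s')], where r is ℓ-Lipschitz in the action (in sup norm) and actions are bounded by a_max, and ‖V₂‖_∞ ≤ r_max/(1-γ). Then ‖V₁ - V₂‖_∞ ≤ 2ℓa_max/(1-γ) + 2γ r_max max_s TV(P(·|s,a₁(s)), P(·|s,a₂(s))) / (1-γ)². -/
/-- Performance-difference bound (absence of sampling error): for two policies with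
Lipschitz reward in the action and bounded actions,
`‖V₁ - V₂‖_∞ ≤ 2ℓa_max/(1-γ) + 2γ r_max max_s TV(P(·|s,a₁(s)), P(·|s,a₂(s)))/(1-γ)²`. -/
theorem performance_difference_bound
    {S : Type*} [Fintype S] [Nonempty S] {d : ℕ}
    (P : S → (Fin d → ℝ) → S → ℝ)
    (hP0 : ∀ s a s', 0 ≤ P s a s') (hP1 : ∀ s a, ∑ s', P s a s' = 1)
    (r : S → (Fin d → ℝ) → ℝ) (γ ℓ amax rmax : ℝ)
    (hγ0 : 0 ≤ γ) (hγ1 : γ < 1) (hℓ : 0 < ℓ) (hamax : 0 ≤ amax) (hrmax : 0 < rmax)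
    (hrLip : ∀ s (a a' : Fin d → ℝ), |r s a - r s a'| ≤ ℓ * ‖a - a'‖)
    (a₁ a₂ : S → (Fin d → ℝ))
    (ha₁ : ∀ s, ‖a₁ s‖ ≤ amax) (ha₂ : ∀ s, ‖a₂ s‖ ≤ amax)
    (V₁ V₂ : S → ℝ)
    (hV₁ : ∀ s, V₁ s = r s (a₁ s) + γ * ∑ s', P s (a₁ s) s' * V₁ s')
    (hV₂ : ∀ s, V₂ s = r s (a₂ s) + γ * ∑ s', P s (a₂ s) s' * V₂ s')
    (hV₂bound : ∀ s, |V₂ s| ≤ rmax / (1 - γ)) :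
    ∀ s, |V₁ s - V₂ s| ≤ 2 * ℓ * amax / (1 - γ) +
      2 * γ * rmax * (⨆ s : S, (1 / 2) * ∑ s', |P s (a₁ s) s' - P s (a₂ s) s'|) /
        (1 - γ) ^ 2 := by
  have h1γ : 0 < 1 - γ := by linarith
  set T : ℝ := ⨆ s : S, (1 / 2) * ∑ s', |P s (a₁ s) s' - P s (a₂ s) s'| with hT
  have hTle : ∀ s : S, (1 / 2) * ∑ s', |P s (a₁ s) s' - P s (a₂ s) s'| ≤ T := by
    intro s
    exact le_ciSup (f := fun s : S => (1 / 2) * ∑ s', |P s (a₁ s) s' - P s (a₂ s) s'|)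
      (Set.Finite.bddAbove (Set.finite_range _)) s
  -- the maximizer of |V₁ - V₂|
  obtain ⟨s₀, -, hs₀⟩ := Finset.exists_max_image Finset.univ (fun s => |V₁ s - V₂ s|)
    ⟨Classical.arbitrary S, Finset.mem_univ _⟩
  have hMle : ∀ s, |V₁ s - V₂ s| ≤ |V₁ s₀ - V₂ s₀| := fun s => hs₀ s (Finset.mem_univ s)
  -- key decomposition at s₀
  have key : V₁ s₀ - V₂ s₀ =
      (r s₀ (a₁ s₀) - r s₀ (a₂ s₀))
      + γ * ∑ s', P s₀ (a₁ s₀) s' * (V₁ s' - V₂ s')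
      + γ * ∑ s', (P s₀ (a₁ s₀) s' - P s₀ (a₂ s₀) s') * V₂ s' := by
    rw [hV₁ s₀, hV₂ s₀]
    simp only [mul_sub, sub_mul, Finset.sum_sub_distrib]
    ring
  have hr : |r s₀ (a₁ s₀) - r s₀ (a₂ s₀)| ≤ 2 * ℓ * amax := by
    calc |r s₀ (a₁ s₀) - r s₀ (a₂ s₀)| ≤ ℓ * ‖a₁ s₀ - a₂ s₀‖ := hrLip _ _ _
      _ ≤ ℓ * (amax + amax) := by
          nlinarith [norm_sub_le (a₁ s₀) (a₂ s₀), ha₁ s₀, ha₂ s₀,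
            norm_nonneg (a₁ s₀ - a₂ s₀)]
      _ = 2 * ℓ * amax := by ring
  have hsum1 : |∑ s', P s₀ (a₁ s₀) s' * (V₁ s' - V₂ s')| ≤ |V₁ s₀ - V₂ s₀| := by
    calc |∑ s', P s₀ (a₁ s₀) s' * (V₁ s' - V₂ s')|
        ≤ ∑ s', |P s₀ (a₁ s₀) s' * (V₁ s' - V₂ s')| := Finset.abs_sum_le_sum_abs _ _
      _ ≤ ∑ s', P s₀ (a₁ s₀) s' * |V₁ s₀ - V₂ s₀| := by
          apply Finset.sum_le_sum
          intro i _
          rw [abs_mul, abs_of_nonneg (hP0 _ _ _)]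
          exact mul_le_mul_of_nonneg_left (hMle i) (hP0 _ _ _)
      _ = |V₁ s₀ - V₂ s₀| := by rw [← Finset.sum_mul, hP1, one_mul]
  have hsum2 : |∑ s', (P s₀ (a₁ s₀) s' - P s₀ (a₂ s₀) s') * V₂ s'| ≤
      2 * T * (rmax / (1 - γ)) := by
    calc |∑ s', (P s₀ (a₁ s₀) s' - P s₀ (a₂ s₀) s') * V₂ s'|
        ≤ ∑ s', |(P s₀ (a₁ s₀) s' - P s₀ (a₂ s₀) s') * V₂ s'| :=
          Finset.abs_sum_le_sum_abs _ _
      _ ≤ ∑ s', |P s₀ (a₁ s₀) s' - P s₀ (a₂ s₀) s'| * (rmax / (1 - γ)) := by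
          apply Finset.sum_le_sum
          intro i _
          rw [abs_mul]
          exact mul_le_mul_of_nonneg_left (hV₂bound i) (abs_nonneg _)
      _ = (∑ s', |P s₀ (a₁ s₀) s' - P s₀ (a₂ s₀) s'|) * (rmax / (1 - γ)) :=
          (Finset.sum_mul _ _ _).symm
      _ ≤ 2 * T * (rmax / (1 - γ)) := by
          have h := hTle s₀
          have hr' : 0 ≤ rmax / (1 - γ) := le_of_lt (div_pos hrmax h1γ)
          nlinarith
  have hMbound : |V₁ s₀ - V₂ s₀| ≤ 2 * ℓ * amax + γ * |V₁ s₀ - V₂ s₀|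
      + γ * (2 * T * (rmax / (1 - γ))) := by
    have e1 : |γ * ∑ s', P s₀ (a₁ s₀) s' * (V₁ s' - V₂ s')| ≤ γ * |V₁ s₀ - V₂ s₀| := by
      rw [abs_mul, abs_of_nonneg hγ0]
      exact mul_le_mul_of_nonneg_left hsum1 hγ0
    have e2 : |γ * ∑ s', (P s₀ (a₁ s₀) s' - P s₀ (a₂ s₀) s') * V₂ s'| ≤
        γ * (2 * T * (rmax / (1 - γ))) := by
      rw [abs_mul, abs_of_nonneg hγ0]
      exact mul_le_mul_of_nonneg_left hsum2 hγ0
    calc |V₁ s₀ - V₂ s₀|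
        = |(r s₀ (a₁ s₀) - r s₀ (a₂ s₀))
            + γ * ∑ s', P s₀ (a₁ s₀) s' * (V₁ s' - V₂ s')
            + γ * ∑ s', (P s₀ (a₁ s₀) s' - P s₀ (a₂ s₀) s') * V₂ s'| := by rw [← key]
      _ ≤ |r s₀ (a₁ s₀) - r s₀ (a₂ s₀)|
            + |γ * ∑ s', P s₀ (a₁ s₀) s' * (V₁ s' - V₂ s')|
            + |γ * ∑ s', (P s₀ (a₁ s₀) s' - P s₀ (a₂ s₀) s') * V₂ s'| := abs_add_three _ _ _
      _ ≤ 2 * ℓ * amax + γ * |V₁ s₀ - V₂ s₀| + γ * (2 * T * (rmax / (1 - γ))) := by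
          linarith
  have hMfin : |V₁ s₀ - V₂ s₀| ≤ 2 * ℓ * amax / (1 - γ) + 2 * γ * rmax * T / (1 - γ) ^ 2 := by
    have hfield : 2 * ℓ * amax / (1 - γ) + 2 * γ * rmax * T / (1 - γ) ^ 2 =
        (2 * ℓ * amax + γ * (2 * T * (rmax / (1 - γ)))) / (1 - γ) := by
      field_simp
    rw [hfield, le_div_iff₀ h1γ]
    nlinarith
  intro s
  exact le_trans (hMle s) hMfin
end
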